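/- Let (X_n)_{n∈ω} be a tower of uniform spaces and Y a uniform space. A function f : u-lim X_n → Y is continuous provided that for every n ≥ 1 the restriction f|X_n : X_n → Y is continuous and regular at the subset X_{n-1} ⊆ X_n. -/

import Mathlib

/-!
Fix `x₀ ∈ X_b` with `b ≥ 1`, an entourage `U` of `Y` and a uniform pseudometric `d` on `Y` with
`{d < 1} ⊆ U`. It suffices to find a gauge `G : X → [0, 1]` that is uniformly continuous on every
stage, hence on `u-lim X_n`, with `G x₀ = 0` and `d (f x₀) (f z) < 1` whenever `G z < 1`.

`G` is glued from functions `g_t` on `X_{b+t}` with `g_{t+1}` extending `g_t`, each obtained by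
McShane's formula `g_{t+1} z = min 1 (inf_w (g_t w + e(w, z)))` for a uniform pseudometric `e` on
`X_{b+t+1}`. Regularity of `f` at `X_{b+t}` lets us choose `e` (by Frink's metrization lemma, at
all dyadic scales at once) so that `g_t w + e(w, z) < 1` yields a point `w'` of `X_{b+t}` with
`g_t w' < 1` and `d (f z) (f w') < 2^{-(t+2)}`; continuity of `f` at `x₀` is regularity at `{x₀}`
and starts the recursion. A point with `G z < 1` is thus linked to `x₀` by a chain descending the
stages along which `f` moves by less than `2^{-(t+1)} + ⋯ + 2^{-1} < 1`.
-/

open Set Filter Topology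

universe u

/-- A tower of uniform spaces on the ambient set `X`: an increasing sequence
`S 0 ⊆ S 1 ⊆ ⋯` of subsets covering `X`, each `S n` carrying a uniformity which is
the subspace uniformity inherited from `S (n+1)`. -/
structure UniformTower (X : Type u) where
  S : ℕ → Set X
  mono : Monotone S
  iUnion_eq : ⋃ n, S n = Set.univ
  u : (n : ℕ) → UniformSpace (S n)
  compat : ∀ n, u n = UniformSpace.comap (Set.inclusion (mono (Nat.le_succ n))) (u (n + 1))

namespace UniformTower

variable {X : Type u} (T : UniformTower X)

/-- The uniform direct limit: the strongest (finest) uniformity on `X` making all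
the identity inclusions `S n → X` uniformly continuous. -/
noncomputable def dirLim : UniformSpace X :=
  sInf {u' : UniformSpace X |
    ∀ n, @UniformContinuous _ _ (T.u n) u' (Subtype.val : T.S n → X)}

/-- The height `|x| = min {n : x ∈ S n}` of a point of `X`. -/
noncomputable def height (x : X) : ℕ := sInf {n | x ∈ T.S n}

lemma mem_S_height (x : X) : x ∈ T.S (T.height x) := by
  have hx : x ∈ ⋃ n, T.S n := T.iUnion_eq ▸ Set.mem_univ x
  rcases Set.mem_iUnion.mp hx with ⟨n, hn⟩
  exact Nat.sInf_mem ⟨n, show n ∈ {m | x ∈ T.S m} from hn⟩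

/-- Given a sequence of pseudometrics `d n` on the stages `S n`, the distance
`d_{|x,y|}(x,y)` where `|x,y| = max (|x|, |y|)`. -/
noncomputable def chainD (d : (n : ℕ) → T.S n → T.S n → ℝ) (x y : X) : ℝ :=
  d (max (T.height x) (T.height y))
    ⟨x, T.mono (le_max_left _ _) (T.mem_S_height x)⟩
    ⟨y, T.mono (le_max_right _ _) (T.mem_S_height y)⟩

/-- The limit pseudometric `lim d_n` of a sequence of pseudometrics:
`lim d_n (x,y) = inf { Σ_{i=1}^m d_{|x_{i-1},x_i|}(x_{i-1},x_i) : x = x_0, x_1, …, x_m = y }`. -/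
noncomputable def limD (d : (n : ℕ) → T.S n → T.S n → ℝ) (x y : X) : ℝ :=
  sInf {r : ℝ | ∃ (m : ℕ) (c : ℕ → X), c 0 = x ∧ c m = y ∧
    r = ∑ i ∈ Finset.range m, T.chainD d (c i) (c (i + 1))}

/-- A sequence of pseudometrics on the stages of the tower is monotone if
`d n ≤ d (n+1)` on `S n × S n`. -/
def MonotoneSeq (d : (n : ℕ) → T.S n → T.S n → ℝ) : Prop :=
  ∀ n (x y : T.S n),
    d n x y ≤ d (n + 1) (Set.inclusion (T.mono (Nat.le_succ n)) x)
      (Set.inclusion (T.mono (Nat.le_succ n)) y)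

end UniformTower

/-- `d` is a pseudometric: it vanishes on the diagonal, is symmetric and satisfies
the triangle inequality. -/
def IsPseudometric {α : Type*} (d : α → α → ℝ) : Prop :=
  (∀ x, d x x = 0) ∧ (∀ x y, d x y = d y x) ∧ (∀ x y z, d x z ≤ d x y + d y z)

/-- `d` is a uniform pseudometric on the uniform space `(α, u)`:
for every `ε > 0` the set `{d < ε}` is an entourage. -/
def IsUniformPseudometric {α : Type*} (u : UniformSpace α) (d : α → α → ℝ) : Prop :=
  IsPseudometric d ∧ ∀ ε : ℝ, 0 < ε → {p : α × α | d p.1 p.2 < ε} ∈ @uniformity α u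

/-- A function `f : Z → Y` between uniform spaces is regular at a subset `A ⊆ Z` if for any
entourages `U` of `Y` and `V` of `Z` there is an entourage `W` of `Z` such that every point
`x ∈ B(A;W)` admits a point `a ∈ A` with `(a,x) ∈ V` and `(f x, f a) ∈ U`. -/
def RegularAt {Z Y : Type*} (uZ : UniformSpace Z) (uY : UniformSpace Y)
    (f : Z → Y) (A : Set Z) : Prop :=
  ∀ U ∈ @uniformity Y uY, ∀ V ∈ @uniformity Z uZ, ∃ W ∈ @uniformity Z uZ,
    ∀ x : Z, (∃ a ∈ A, (x, a) ∈ W) → ∃ a ∈ A, (a, x) ∈ V ∧ (f x, f a) ∈ U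

open scoped NNReal SetRel Uniformity

section Frink

variable {Z : Type*} [UniformSpace Z]

lemma exists_symm_seq_comp_comp_subset {E : ℕ → SetRel Z Z} (hE : ∀ k, E k ∈ 𝓤 Z) :
    ∃ H : ℕ → SetRel Z Z, (∀ k, H k ∈ 𝓤 Z) ∧ (∀ k, (H k).IsSymm) ∧
      (∀ k, H (k + 1) ○ H (k + 1) ○ H (k + 1) ⊆ H k) ∧ ∀ k, H k ⊆ E k := by
  choose! r hr_mem hr_symm hr_comp using
    fun s (hs : s ∈ 𝓤 Z) => comp_comp_symm_mem_uniformity_sets hs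
  have hr_sub : ∀ s ∈ 𝓤 Z, r s ⊆ s := fun s hs => by
    have := isRefl_of_mem_uniformity (hr_mem s hs)
    exact (SetRel.left_subset_comp.trans SetRel.left_subset_comp).trans (hr_comp s hs)
  let H : ℕ → SetRel Z Z := fun k => Nat.rec (r (E 0)) (fun k t => r (t ∩ E (k + 1))) k
  have hH_mem : ∀ k, H k ∈ 𝓤 Z := by
    intro k
    induction k with
    | zero => exact hr_mem _ (hE 0)
    | succ k ih => exact hr_mem _ (inter_mem ih (hE (k + 1)))
  have hH_succ : ∀ k, H (k + 1) = r (H k ∩ E (k + 1)) := fun k => rfl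
  refine ⟨H, hH_mem, ?_, fun k => ?_, ?_⟩
  · rintro (_ | k)
    exacts [hr_symm _ (hE 0), hr_symm _ (inter_mem (hH_mem k) (hE (k + 1)))]
  · rw [hH_succ]
    exact (hr_comp _ (inter_mem (hH_mem k) (hE (k + 1)))).trans inter_subset_left
  · rintro (_ | k)
    · exact hr_sub _ (hE 0)
    · rw [hH_succ]
      exact (hr_sub _ (inter_mem (hH_mem k) (hE (k + 1)))).trans inter_subset_right

/-- The pre-distance `2^{-n}`, `n` the first index with `(x, y) ∉ H n`, of the proof of
`UniformSpace.metrizable_uniformity`. -/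
lemma exists_preNNDist_of_comp_comp_subset {H : ℕ → SetRel Z Z} (hH_mem : ∀ k, H k ∈ 𝓤 Z)
    (hH_symm : ∀ k, (H k).IsSymm) (hH_comp : ∀ k, H (k + 1) ○ H (k + 1) ○ H (k + 1) ⊆ H k) :
    ∃ p : Z → Z → ℝ≥0, (∀ x, p x x = 0) ∧ (∀ x y, p x y = p y x) ∧
      (∀ x₁ x₂ x₃ x₄, p x₁ x₄ ≤ 2 * max (p x₁ x₂) (max (p x₂ x₃) (p x₃ x₄))) ∧
      ∀ n x y, (1 / 2) ^ n ≤ p x y ↔ (x, y) ∉ H n := by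
  classical
  have hH_anti : Antitone H := antitone_nat_of_succ_le fun k => by
    have := isRefl_of_mem_uniformity (hH_mem (k + 1))
    exact (SetRel.left_subset_comp.trans SetRel.left_subset_comp).trans (hH_comp k)
  let p : Z → Z → ℝ≥0 := fun x y =>
    if h : ∃ n, (x, y) ∉ H n then (1 / 2) ^ Nat.find h else 0
  have hp_le : ∀ n x y, (1 / 2) ^ n ≤ p x y ↔ (x, y) ∉ H n := by
    intro n x y
    simp only [p]
    split_ifs with h
    · rw [pow_le_pow_iff_right_of_lt_one₀ (by norm_num) (by norm_num), Nat.find_le_iff]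
      exact ⟨fun ⟨m, hmn, hm⟩ hn => hm (hH_anti hmn hn), fun h => ⟨n, le_rfl, h⟩⟩
    · push Not at h
      simp only [h, not_true, iff_false, not_le]
      positivity
  refine ⟨p, fun x => dif_neg ?_, fun x y => ?_, fun x₁ x₂ x₃ x₄ => ?_, hp_le⟩
  · push Not
    exact fun n => refl_mem_uniformity (hH_mem n)
  · have := hH_symm
    simp only [p, SetRel.comm (R := H _) (a := x)]
  · by_cases h : ∃ n, (x₁, x₄) ∉ H n
    · refine (dif_pos h).trans_le ?_
      rw [← div_le_iff₀' zero_lt_two, ← mul_one_div (_ ^ _), ← pow_succ]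
      simp only [le_max_iff, hp_le, ← not_and_or]
      rintro ⟨h₁₂, h₂₃, h₃₄⟩
      exact Nat.find_spec h (hH_comp _ ⟨x₃, ⟨x₂, h₁₂, h₂₃⟩, h₃₄⟩)
    · exact (dif_neg h).trans_le zero_le

lemma exists_isUniformPseudometric_lt_pow {E : ℕ → SetRel Z Z} (hE : ∀ k, E k ∈ 𝓤 Z) :
    ∃ e : Z → Z → ℝ, IsUniformPseudometric ‹_› e ∧
      ∀ k x y, e x y < (1 / 2) ^ k → (x, y) ∈ E k := by
  obtain ⟨H, hH_mem, hH_symm, hH_comp, hHE⟩ := exists_symm_seq_comp_comp_subset hE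
  obtain ⟨p, hp_self, hp_comm, hp_tri, hp_le⟩ :=
    exists_preNNDist_of_comp_comp_subset hH_mem hH_symm hH_comp
  let I := PseudoMetricSpace.ofPreNNDist p hp_self hp_comm
  have hρ_le : ∀ x y, @dist Z I.toDist x y ≤ p x y :=
    PseudoMetricSpace.dist_ofPreNNDist_le p hp_self hp_comm
  have hp_le_ρ : ∀ x y, (p x y : ℝ) ≤ 2 * @dist Z I.toDist x y :=
    PseudoMetricSpace.le_two_mul_dist_ofPreNNDist p hp_self hp_comm hp_tri
  refine ⟨fun x y => 2 * @dist Z I.toDist x y,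
    ⟨⟨fun x => ?_, fun x y => ?_, fun x y z => ?_⟩, fun ε hε => ?_⟩, fun k x y hxy => hHE k ?_⟩
  · simp
  · simp only [@dist_comm Z I]
  · linarith [@dist_triangle Z I x y z]
  · obtain ⟨k, hk⟩ := exists_pow_lt_of_lt_one hε (by norm_num : (1 / 2 : ℝ) < 1)
    refine mem_of_superset (hH_mem (k + 1)) fun q hq => ?_
    have h1 : ((p q.1 q.2 : ℝ≥0) : ℝ) < (1 / 2) ^ (k + 1) := by
      exact_mod_cast lt_of_not_ge fun h => (hp_le _ _ _).mp h hq
    have h2 : ((1 : ℝ) / 2) ^ (k + 1) = (1 / 2) ^ k / 2 := by ring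
    show 2 * @dist Z I.toDist q.1 q.2 < ε
    linarith [hρ_le q.1 q.2]
  · by_contra hq
    have h1 := NNReal.coe_le_coe.mpr ((hp_le _ _ _).mpr hq)
    push_cast at h1
    linarith [hp_le_ρ x y]

end Frink

lemma IsPseudometric.nonneg {α : Type*} {e : α → α → ℝ} (he : IsPseudometric e) (x y : α) :
    0 ≤ e x y := by
  have := he.2.2 x y x
  rw [he.1 x, he.2.1 y x] at this
  linarith

lemma exists_lt_half_pow_and_half_pow_succ_lt {w s : ℝ} (hw : 0 ≤ w) (hws : w < s) (hs : s ≤ 1) :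
    ∃ k : ℕ, w < (1 / 2) ^ k ∧ (1 / 2) ^ (k + 1) < s := by
  classical
  have hex : ∃ k, ((1 : ℝ) / 2) ^ (k + 1) < s := by
    obtain ⟨n, hn⟩ := exists_pow_lt_of_lt_one (hw.trans_lt hws) (by norm_num : (1 / 2 : ℝ) < 1)
    exact ⟨n, lt_of_le_of_lt (pow_le_pow_of_le_one (by norm_num) (by norm_num) n.le_succ) hn⟩
  refine ⟨Nat.find hex, ?_, Nat.find_spec hex⟩
  rcases h : Nat.find hex with _ | k
  · simpa using hws.trans_le hs
  · exact hws.trans_le (not_lt.mp (Nat.find_min hex (h ▸ k.lt_succ_self)))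

/-- McShane's formula `z ↦ min 1 (⨅ w, g w + e (i w) z)`. -/
lemma IsUniformPseudometric.exists_uniformContinuous_extend {W Z : Type*} [UniformSpace Z]
    [Nonempty W] {e : Z → Z → ℝ} (he : IsUniformPseudometric ‹_› e) {i : W → Z} {g : W → ℝ}
    (hg : ∀ w, g w ∈ Icc (0 : ℝ) 1) (hge : ∀ w w', g w ≤ g w' + e (i w') (i w)) :
    ∃ g' : Z → ℝ, UniformContinuous g' ∧ g' ∘ i = g ∧ (∀ z, g' z ∈ Icc (0 : ℝ) 1) ∧
      ∀ z, g' z < 1 → ∃ w, g w + e (i w) z < 1 := by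
  have he0 := he.1.nonneg
  have hbdd : ∀ z, BddBelow (range fun w => g w + e (i w) z) :=
    fun z => ⟨0, forall_mem_range.2 fun w => add_nonneg (hg w).1 (he0 _ _)⟩
  set g' : Z → ℝ := fun z => min 1 (⨅ w, g w + e (i w) z)
  have hlip : ∀ z z', g' z ≤ g' z' + e z' z := by
    intro z z'
    refine sub_le_iff_le_add.1 (le_min ?_ (le_ciInf fun w => ?_))
    · linarith [min_le_left 1 (⨅ w, g w + e (i w) z), he0 z' z]
    · have := he.1.2.2 (i w) z' z
      linarith [(min_le_right (1 : ℝ) _).trans (ciInf_le (hbdd z) w)]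
  refine ⟨g', ?_, funext fun w => ?_, fun z => ⟨?_, min_le_left _ _⟩, fun z hz => ?_⟩
  · refine Metric.uniformity_basis_dist.tendsto_right_iff.2 fun ε hε =>
      mem_of_superset (he.2 ε hε) fun q hq => ?_
    have hq : e q.1 q.2 < ε := hq
    have h1 := hlip q.1 q.2
    rw [he.1.2.1] at h1
    show |g' q.1 - g' q.2| < ε
    rw [abs_lt]
    constructor <;> linarith [hlip q.2 q.1]
  · refine le_antisymm ((min_le_right _ _).trans ((ciInf_le (hbdd _) w).trans ?_)) ?_
    · rw [he.1.1, add_zero]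
    · exact le_min (hg w).2 (le_ciInf fun w' => hge w w')
  · exact le_min zero_le_one (le_ciInf fun w => add_nonneg (hg w).1 (he0 _ _))
  · exact exists_lt_of_ciInf_lt ((min_lt_iff.1 hz).resolve_left (lt_irrefl 1))

section Regular

variable {W Z Y : Type*} [UniformSpace W] [UniformSpace Z] [UniformSpace Y]

lemma RegularAt.exists_isUniformPseudometric {i : W → Z} (hi : IsUniformInducing i) {f : Z → Y}
    (hf : RegularAt ‹_› ‹_› f (range i)) {D : SetRel Y Y} (hD : D ∈ 𝓤 Y) {g : W → ℝ}
    (hg : UniformContinuous g) (hg01 : ∀ w, g w ∈ Icc (0 : ℝ) 1) :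
    ∃ e : Z → Z → ℝ, IsUniformPseudometric ‹_› e ∧ (∀ w w', g w ≤ g w' + e (i w') (i w)) ∧
      ∀ w z, g w + e (i w) z < 1 → ∃ w', g w' < 1 ∧ (f z, f (i w')) ∈ D := by
  have hT : ∀ k : ℕ, ∃ T ∈ 𝓤 Z, ∀ w w', (i w, i w') ∈ T → |g w - g w'| < (1 / 2) ^ (k + 1) := by
    intro k
    have := hg (Metric.dist_mem_uniformity (by positivity : (0 : ℝ) < (1 / 2) ^ (k + 1)))
    rw [← hi.comap_uniformity] at this
    obtain ⟨T, hT, hTsub⟩ := this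
    exact ⟨T, hT, fun w w' h => hTsub (show ((w, w') : W × W) ∈ _ from h)⟩
  choose T hT_mem hT using hT
  choose P hP_mem hP_symm hPT using fun k => comp_symm_mem_uniformity_sets (hT_mem k)
  choose V hV_mem hV using fun k => hf D hD (P k) (hP_mem k)
  obtain ⟨e, he, heE⟩ :=
    exists_isUniformPseudometric_lt_pow fun k => inter_mem (hP_mem k) (hV_mem k)
  have hclose : ∀ k w z w', e (i w) z < (1 / 2) ^ k → (z, i w') ∈ P k →
      |g w - g w'| < (1 / 2) ^ (k + 1) :=
    fun k w z w' hz hw' => hT k w w' (hPT k ⟨z, (heE k _ _ hz).1, hw'⟩)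
  refine ⟨e, he, fun w w' => ?_, fun w z hz => ?_⟩
  · by_contra! h
    obtain ⟨k, hk, hks⟩ := exists_lt_half_pow_and_half_pow_succ_lt (he.1.nonneg _ _)
      (lt_sub_iff_add_lt'.2 h) (by linarith [(hg01 w).2, (hg01 w').1])
    have := hclose k w' (i w) w hk (refl_mem_uniformity (hP_mem k))
    linarith [neg_le_abs (g w' - g w)]
  · obtain ⟨k, hk, hks⟩ := exists_lt_half_pow_and_half_pow_succ_lt (he.1.nonneg _ _)
      (lt_sub_iff_add_lt'.2 hz) (by linarith [(hg01 w).1])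
    rw [he.1.2.1] at hk
    obtain ⟨_, ⟨w', rfl⟩, hw'z, hf'⟩ := hV k z ⟨i w, mem_range_self w, (heE k _ _ hk).2⟩
    rw [he.1.2.1] at hk
    have := hclose k w z w' hk ((@SetRel.comm _ (P k) _ _ (hP_symm k)).1 hw'z)
    exact ⟨w', by linarith [neg_abs_le (g w - g w')], hf'⟩

theorem RegularAt.exists_uniformContinuous_extend [Nonempty W] {i : W → Z}
    (hi : IsUniformInducing i) {f : Z → Y} (hf : RegularAt ‹_› ‹_› f (range i)) {D : SetRel Y Y}
    (hD : D ∈ 𝓤 Y) {g : W → ℝ} (hg : UniformContinuous g) (hg01 : ∀ w, g w ∈ Icc (0 : ℝ) 1) :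
    ∃ g' : Z → ℝ, UniformContinuous g' ∧ g' ∘ i = g ∧ (∀ z, g' z ∈ Icc (0 : ℝ) 1) ∧
      ∀ z, g' z < 1 → ∃ w, g w < 1 ∧ (f z, f (i w)) ∈ D := by
  obtain ⟨e, he, hge, hreg⟩ := hf.exists_isUniformPseudometric hi hD hg hg01
  obtain ⟨g', hg'_uc, hg'i, hg'01, hg'⟩ := he.exists_uniformContinuous_extend hg01 hge
  exact ⟨g', hg'_uc, hg'i, hg'01, fun z hz => (hg' z hz).elim (hreg · z)⟩

lemma ContinuousAt.regularAt_singleton {f : Z → Y} {a : Z} (hf : ContinuousAt f a) :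
    RegularAt ‹_› ‹_› f {a} := by
  intro U hU V hV
  have hfa : f ⁻¹' {y | (y, f a) ∈ U} ∈ 𝓝 a := hf (mem_nhds_right (f a) hU)
  refine ⟨_, inter_mem (mem_nhds_uniformity_iff_left.1 hfa) (symm_le_uniformity hV), ?_⟩
  rintro x ⟨a', ha', hxa, hax⟩
  rw [mem_singleton_iff.1 ha'] at hxa hax
  exact ⟨a, rfl, hax, hxa rfl⟩

lemma ContinuousAt.exists_uniformContinuous_gauge {f : Z → Y} {a : Z} (hf : ContinuousAt f a)
    {D : SetRel Y Y} (hD : D ∈ 𝓤 Y) :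
    ∃ g : Z → ℝ, UniformContinuous g ∧ g a = 0 ∧ (∀ z, g z ∈ Icc (0 : ℝ) 1) ∧
      ∀ z, g z < 1 → (f z, f a) ∈ D := by
  have hf' : RegularAt ‹_› ‹_› f (range (Subtype.val : ({a} : Set Z) → Z)) := by
    rw [Subtype.range_coe]
    exact hf.regularAt_singleton
  have : Nonempty ({a} : Set Z) := ⟨⟨a, rfl⟩⟩
  obtain ⟨g, hg, hgi, hg01, hgf⟩ := hf'.exists_uniformContinuous_extend
    (isUniformInducing_val _) hD uniformContinuous_const (fun _ => ⟨le_rfl, zero_le_one⟩)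
  refine ⟨g, hg, congrFun hgi ⟨a, rfl⟩, hg01, fun z hz => ?_⟩
  obtain ⟨⟨_, rfl⟩, -, hz⟩ := hgf z hz
  exact hz

end Regular

namespace UniformTower

attribute [local instance] UniformTower.u

variable {X : Type u} (T : UniformTower X)

lemma isUniformInducing_inclusion_succ (n : ℕ) :
    IsUniformInducing (inclusion (T.mono n.le_succ) : T.S n → T.S (n + 1)) :=
  isUniformInducing_iff_uniformSpace.2 (T.compat n).symm

lemma uniformContinuous_inclusion {m n : ℕ} (h : m ≤ n) :
    UniformContinuous (inclusion (T.mono h) : T.S m → T.S n) := by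
  induction n, h using Nat.le_induction with
  | base => exact uniformContinuous_id
  | succ n _ ih => exact (T.isUniformInducing_inclusion_succ n).uniformContinuous.comp ih

lemma uniformContinuous_dirLim {β : Type*} [UniformSpace β] {g : X → β}
    (hg : ∀ n, UniformContinuous (g ∘ Subtype.val : T.S n → β)) :
    @UniformContinuous _ _ T.dirLim _ g :=
  (@uniformContinuous_iff_le_comap _ _ T.dirLim _ g).2 <| sInf_le fun n =>
    uniformContinuous_comap' (hg n)

lemma exists_uniformContinuous_dirLim_of_compat {β : Type*} [UniformSpace β] (b : ℕ)
    (g : ∀ t, T.S (b + t) → β) (hg : ∀ t, UniformContinuous (g t))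
    (hcompat : ∀ t, g (t + 1) ∘ inclusion (T.mono (b + t).le_succ) = g t) :
    ∃ G : X → β, @UniformContinuous _ _ T.dirLim _ G ∧ ∀ t (x : T.S (b + t)), G x = g t x := by
  have hmono : ∀ {t t'} (x : X) (h : x ∈ T.S (b + t)) (h' : x ∈ T.S (b + t')), t ≤ t' →
      g t' ⟨x, h'⟩ = g t ⟨x, h⟩ := by
    intro t t' x h h' htt'
    induction t', htt' using Nat.le_induction with
    | base => rfl
    | succ t' htt' ih =>
      rw [← ih (T.mono (by omega) h)]
      exact congrFun (hcompat t') ⟨x, _⟩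
  have hconst : ∀ {t t'} (x : X) (h : x ∈ T.S (b + t)) (h' : x ∈ T.S (b + t')),
      g t ⟨x, h⟩ = g t' ⟨x, h'⟩ := fun x h h' =>
    (le_total _ _).elim (fun h'' => (hmono x h h' h'').symm) (hmono x h' h)
  have hmem : ∀ x, x ∈ T.S (b + T.height x) := fun x => T.mono (by omega) (T.mem_S_height x)
  refine ⟨fun x => g (T.height x) ⟨x, hmem x⟩, T.uniformContinuous_dirLim fun n => ?_,
    fun t x => hconst _ _ _⟩
  have : (fun x : X => g (T.height x) ⟨x, hmem x⟩) ∘ Subtype.val =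
      g n ∘ inclusion (T.mono (Nat.le_add_left n b)) := funext fun x => hconst _ _ _
  rw [this]
  exact (hg n).comp (T.uniformContinuous_inclusion (Nat.le_add_left n b))

variable {Y : Type*} [UniformSpace Y] {f : X → Y} {b : ℕ} {x₀ : X} (hx₀ : x₀ ∈ T.S b)
  (hcont : ContinuousAt (fun z : T.S b => f z) ⟨x₀, hx₀⟩)
  (hreg : ∀ t, RegularAt (T.u (b + t + 1)) ‹_› (fun z : T.S (b + t + 1) => f z)
    {z | z.val ∈ T.S (b + t)})
include hcont hreg

theorem exists_seq_uniformContinuous_extend {D : ℕ → SetRel Y Y} (hD : ∀ t, D t ∈ 𝓤 Y) :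
    ∃ g : ∀ t, T.S (b + t) → ℝ, (∀ t, UniformContinuous (g t)) ∧ (∀ t z, g t z ∈ Icc (0 : ℝ) 1) ∧
      (∀ t, g (t + 1) ∘ inclusion (T.mono (b + t).le_succ) = g t) ∧ g 0 ⟨x₀, hx₀⟩ = 0 ∧
      (∀ z, g 0 z < 1 → (f z, f x₀) ∈ D 0) ∧
      ∀ t z, g (t + 1) z < 1 → ∃ w, g t w < 1 ∧ (f z, f w) ∈ D (t + 1) := by
  obtain ⟨g₀, hg₀, hg₀i, hg₀01, hg₀f⟩ := hcont.exists_uniformContinuous_gauge (hD 0)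
  have hstep : ∀ t (g : T.S (b + t) → ℝ), UniformContinuous g → (∀ z, g z ∈ Icc (0 : ℝ) 1) →
      ∃ g' : T.S (b + t + 1) → ℝ, UniformContinuous g' ∧
        g' ∘ inclusion (T.mono (b + t).le_succ) = g ∧ (∀ z, g' z ∈ Icc (0 : ℝ) 1) ∧
        ∀ z, g' z < 1 → ∃ w, g w < 1 ∧ (f z, f w) ∈ D (t + 1) := by
    intro t g hg hg01
    have : Nonempty (T.S (b + t)) := ⟨⟨x₀, T.mono (Nat.le_add_right b t) hx₀⟩⟩
    have hf := hreg t
    rw [← range_inclusion (T.mono (b + t).le_succ)] at hf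
    exact hf.exists_uniformContinuous_extend (T.isUniformInducing_inclusion_succ _) (hD (t + 1))
      hg hg01
  choose! ext hext_uc hext_compat hext01 hext using hstep
  let g : ∀ t, T.S (b + t) → ℝ := fun t => Nat.rec (motive := fun t => T.S (b + t) → ℝ) g₀ ext t
  have hg : ∀ t, UniformContinuous (g t) ∧ ∀ z, g t z ∈ Icc (0 : ℝ) 1 := by
    intro t
    induction t with
    | zero => exact ⟨hg₀, hg₀01⟩
    | succ t ih => exact ⟨hext_uc t _ ih.1 ih.2, hext01 t _ ih.1 ih.2⟩
  exact ⟨g, fun t => (hg t).1, fun t => (hg t).2, fun t => hext_compat t _ (hg t).1 (hg t).2,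
    hg₀i, hg₀f, fun t => hext t _ (hg t).1 (hg t).2⟩

theorem exists_uniformContinuous_gauge {U : SetRel Y Y} (hU : U ∈ 𝓤 Y) :
    ∃ G : X → ℝ, @UniformContinuous _ _ T.dirLim _ G ∧ G x₀ < 1 ∧
      ∀ z, G z < 1 → (f x₀, f z) ∈ U := by
  obtain ⟨d, hd, hdU⟩ := exists_isUniformPseudometric_lt_pow fun _ => hU
  obtain ⟨g, hg, -, hcompat, hgx₀, hg₀, hg_succ⟩ :=
    T.exists_seq_uniformContinuous_extend hx₀ hcont hreg
      (D := fun t => {p | d p.1 p.2 < (1 / 2) ^ (t + 1)}) fun t => hd.2 _ (by positivity)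
  have hgd : ∀ t z, g t z < 1 → d (f x₀) (f z) < 1 - (1 / 2) ^ (t + 1) := by
    intro t
    induction t with
    | zero =>
      intro z hz
      have := hg₀ z hz
      rw [hd.1.2.1]
      norm_num at this ⊢
      exact this
    | succ t ih =>
      intro z hz
      obtain ⟨w, hw, hwz⟩ := hg_succ t z hz
      have h1 := ih w hw
      have h2 : d (f z) (f w) < (1 / 2) ^ (t + 2) := hwz
      rw [hd.1.2.1] at h2
      have h3 := hd.1.2.2 (f x₀) (f w) (f z)
      have h4 : ((1 : ℝ) / 2) ^ (t + 1) = 2 * (1 / 2) ^ (t + 2) := by ring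
      linarith
  obtain ⟨G, hG, hGg⟩ := T.exists_uniformContinuous_dirLim_of_compat b g hg hcompat
  refine ⟨G, hG, ?_, fun z hz => hdU 0 _ _ ?_⟩
  · rw [hGg 0 ⟨x₀, hx₀⟩]
    exact hgx₀.trans_lt one_pos
  · have hz' : z ∈ T.S (b + T.height z) := T.mono (by omega) (T.mem_S_height z)
    rw [hGg _ ⟨z, hz'⟩] at hz
    have := hgd _ _ hz
    rw [pow_zero]
    linarith [pow_pos (by norm_num : (0 : ℝ) < 1 / 2) (T.height z + 1)]

theorem continuousAt_dirLim : @ContinuousAt _ _ T.dirLim.toTopologicalSpace _ f x₀ := by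
  refine (@Uniform.continuousAt_iff'_right _ _ _ T.dirLim.toTopologicalSpace _ _).2 fun U hU => ?_
  obtain ⟨G, hG, hGx₀, hGU⟩ := T.exists_uniformContinuous_gauge hx₀ hcont hreg hU
  have hGc := @UniformContinuous.continuous _ _ T.dirLim _ _ hG
  exact (@Continuous.tendsto _ _ T.dirLim.toTopologicalSpace _ _ hGc x₀).eventually
    (Iio_mem_nhds hGx₀) |>.mono hGU

end UniformTower

/-- A function `f : u-lim X_n → Y` from the uniform direct limit of a tower of uniform spaces
to a uniform space `Y` is continuous provided that for every `n ≥ 1` the restriction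
`f|X_n : X_n → Y` is continuous and regular at the subset `X_{n-1} ⊆ X_n`
(here stated with `n = m + 1`). -/
theorem statement4 {X Y : Type u} (T : UniformTower X) (uY : UniformSpace Y) (f : X → Y)
    (hcont : ∀ m : ℕ, @Continuous _ _ (T.u (m + 1)).toTopologicalSpace uY.toTopologicalSpace
      (fun z : T.S (m + 1) => f z.val))
    (hreg : ∀ m : ℕ, RegularAt (T.u (m + 1)) uY (fun z : T.S (m + 1) => f z.val)
      {z : T.S (m + 1) | z.val ∈ T.S m}) :
    @Continuous X Y T.dirLim.toTopologicalSpace uY.toTopologicalSpace f := by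
  exact (@continuous_iff_continuousAt _ _ T.dirLim.toTopologicalSpace _ _).2 fun x₀ =>
    T.continuousAt_dirLim (T.mono (T.height x₀).le_succ (T.mem_S_height x₀))
      (@Continuous.continuousAt _ _ (T.u _).toTopologicalSpace _ _ _ (hcont _)) fun t => hreg _
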